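/- arXiv:1311.0587 — 7 statements merged into one kernel-verified Lean document; each statement's English description precedes it below -/
import Mathlib

section
/- Let {Y_j}_{j≥1} be i.i.d. copies of a real random variable Y with finite mean μ, and set \bar{Y}_d = d^{-1} Σ_{j=1}^d Y_j. Let φ: ℝ → ℝ be measurable such that |φ| is convex on ℝ and E|φ(Y)| < ∞. Then for any M > |μ|, E( |φ(\bar{Y}_d)| · 1{|\bar{Y}_d| > M} ) → 0 as d → ∞. -/
open MeasureTheory ProbabilityTheory Filter Topology Finset

/-!
By Jensen's inequality `|φ(Ȳ_d)|` is dominated by the average `Z̄_d` of the i.i.d. integrable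
variables `Z_j = |φ(Y_j)|`. The strong law in `L¹` makes `Z̄_d` converge to `E Z` in `L¹`, so
`∫_A Z̄_d ≤ ‖Z̄_d - E Z‖₁ + E Z · P(A)` for every event `A`, while the almost sure strong law
for `Y` gives `P(|Ȳ_d| > M) → 0` because `M > |μ|`.
-/

theorem ConvexOn.map_sum_div_card_le {s : Set ℝ} {f : ℝ → ℝ} (hf : ConvexOn ℝ s f) {ι : Type*}
    {t : Finset ι} (ht : t.Nonempty) {x : ι → ℝ} (hx : ∀ i ∈ t, x i ∈ s) :
    f ((∑ i ∈ t, x i) / #t) ≤ (∑ i ∈ t, f (x i)) / #t := by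
  have hcard : (#t : ℝ) ≠ 0 := by exact_mod_cast ht.card_ne_zero
  have := hf.map_sum_le (w := fun _ => (#t : ℝ)⁻¹) (fun _ _ => by positivity)
    (by simp [hcard]) hx
  simp only [smul_eq_mul, ← mul_sum] at this
  rwa [inv_mul_eq_div, inv_mul_eq_div] at this

theorem MeasureTheory.TendstoInMeasure.tendsto_measure_lt_norm {ι Ω E : Type*}
    [MeasurableSpace Ω] {μ : Measure Ω} [SeminormedAddCommGroup E] {l : Filter ι}
    {S : ι → Ω → E} {a : E} {M : ℝ} (hS : TendstoInMeasure μ S l fun _ => a) (hM : ‖a‖ < M) :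
    Tendsto (fun i => μ {ω | M < ‖S i ω‖}) l (𝓝 0) := by
  refine tendsto_of_tendsto_of_tendsto_of_le_of_le tendsto_const_nhds
    (hS _ (ENNReal.ofReal_pos.2 (sub_pos.2 hM))) (fun _ => zero_le)
    fun i => measure_mono fun ω (hω : M < ‖S i ω‖) => ?_
  change ENNReal.ofReal (M - ‖a‖) ≤ edist (S i ω) a
  rw [edist_dist, ENNReal.ofReal_le_ofReal_iff dist_nonneg, dist_eq_norm]
  linarith [norm_sub_norm_le (S i ω) a]

theorem MeasureTheory.tendsto_setIntegral_zero_of_tendsto_eLpNorm_one {ι Ω E : Type*}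
    [MeasurableSpace Ω] {μ : Measure Ω} [IsFiniteMeasure μ] [NormedAddCommGroup E]
    [NormedSpace ℝ E] [CompleteSpace E] {l : Filter ι} {g : ι → Ω → E} {c : E}
    {A : ι → Set Ω} (hg : ∀ i, Integrable (g i) μ)
    (hgc : Tendsto (fun i => eLpNorm (fun ω => g i ω - c) 1 μ) l (𝓝 0))
    (hA : Tendsto (fun i => μ (A i)) l (𝓝 0)) :
    Tendsto (fun i => ∫ ω in A i, g i ω ∂μ) l (𝓝 0) := by
  have hbound : ∀ i, ‖∫ ω in A i, g i ω ∂μ‖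
      ≤ (eLpNorm (fun ω => g i ω - c) 1 μ).toReal + (μ (A i)).toReal * ‖c‖ := by
    intro i
    have hdev : Integrable (fun ω => g i ω - c) μ := (hg i).sub (integrable_const c)
    calc ‖∫ ω in A i, g i ω ∂μ‖
        = ‖∫ ω in A i, (g i ω - c) ∂μ + μ.real (A i) • c‖ := by
          rw [← setIntegral_const,
            ← integral_add hdev.integrableOn (integrable_const c).integrableOn]
          simp
      _ ≤ ‖∫ ω in A i, (g i ω - c) ∂μ‖ + μ.real (A i) * ‖c‖ :=
          (norm_add_le _ _).trans_eq (by rw [norm_smul, Real.norm_of_nonneg measureReal_nonneg])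
      _ ≤ ∫ ω, ‖g i ω - c‖ ∂μ + μ.real (A i) * ‖c‖ := by
          gcongr
          exact (norm_integral_le_integral_norm _).trans
            (setIntegral_le_integral hdev.norm (ae_of_all _ fun _ => norm_nonneg _))
      _ = _ := by
          rw [integral_norm_eq_lintegral_enorm hdev.aestronglyMeasurable,
            eLpNorm_one_eq_lintegral_enorm, measureReal_def]
  refine squeeze_zero_norm hbound ?_
  have hdev := (ENNReal.tendsto_toReal ENNReal.zero_ne_top).comp hgc
  have hmeas := ((ENNReal.tendsto_toReal ENNReal.zero_ne_top).comp hA).mul_const ‖c‖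
  simpa using hdev.add hmeas

/-- `{Y_j}` i.i.d. copies of `Y` with finite mean `μY`,
`Ȳ_d = d⁻¹ ∑_{j<d} Y_j`, `φ` measurable with `|φ|` convex on `ℝ` and `E|φ(Y)| < ∞`.
Then for any `M > |μY|`, `E(|φ(Ȳ_d)| 1{|Ȳ_d| > M}) → 0` as `d → ∞`. -/
theorem stmt_1 {Ω : Type*} [MeasurableSpace Ω] (μ : Measure Ω) [IsProbabilityMeasure μ]
    (Y : ℕ → Ω → ℝ) (μY : ℝ)
    (hYmeas : ∀ j, Measurable (Y j))
    (hindep : iIndepFun Y μ)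
    (hident : ∀ j, IdentDistrib (Y j) (Y 0) μ μ)
    (hintY : Integrable (Y 0) μ)
    (hmean : μY = ∫ ω, Y 0 ω ∂μ)
    (φ : ℝ → ℝ) (hφ : Measurable φ)
    (hconv : ConvexOn ℝ Set.univ (fun x => |φ x|))
    (hintφ : Integrable (fun ω => |φ (Y 0 ω)|) μ)
    (M : ℝ) (hM : |μY| < M) :
    Tendsto
      (fun d => ∫ ω in {ω | M < |(∑ j ∈ Finset.range d, Y j ω) / d|},
        |φ ((∑ j ∈ Finset.range d, Y j ω) / d)| ∂μ)
      atTop (nhds (0 : ℝ)) := by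
  set Z : ℕ → Ω → ℝ := fun j ω => |φ (Y j ω)|
  have hZ : ∀ j, IdentDistrib (Z j) (Z 0) μ μ := fun j => (hident j).comp hφ.abs
  have hZint : ∀ d, Integrable (fun ω => (∑ j ∈ range d, Z j ω) / d) μ := fun d =>
    (integrable_finsetSum _ fun j _ => (hZ j).integrable_iff.2 hintφ).div_const _
  have hZL1 : Tendsto (fun d : ℕ => eLpNorm
      (fun ω => (∑ j ∈ range d, Z j ω) / d - μ[Z 0]) 1 μ) atTop (𝓝 0) := by
    have hZindep : iIndepFun Z μ := hindep.comp (fun _ x => |φ x|) fun _ => hφ.abs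
    simpa [inv_mul_eq_div] using strong_law_Lp le_rfl ENNReal.one_ne_top Z
      (memLp_one_iff_integrable.2 hintφ) (fun i j hij => hZindep.indepFun hij) hZ
  have hA : Tendsto (fun d : ℕ => μ {ω | M < |(∑ j ∈ range d, Y j ω) / d|}) atTop (𝓝 0) := by
    have hY : TendstoInMeasure μ (fun d ω => (∑ j ∈ range d, Y j ω) / d) atTop fun _ => μY :=
      tendstoInMeasure_of_tendsto_ae (fun d => by fun_prop)
        (hmean ▸ strong_law_ae_real Y hintY (fun i j hij => hindep.indepFun hij) hident)
    simpa only [Real.norm_eq_abs] using hY.tendsto_measure_lt_norm hM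
  refine tendsto_of_tendsto_of_tendsto_of_le_of_le'
    tendsto_const_nhds (tendsto_setIntegral_zero_of_tendsto_eLpNorm_one hZint hZL1 hA)
    (Eventually.of_forall fun d => integral_nonneg fun _ => abs_nonneg _) ?_
  filter_upwards [eventually_ne_atTop 0] with d hd
  refine integral_mono_of_nonneg (ae_of_all _ fun _ => abs_nonneg _) (hZint d).integrableOn
    (ae_of_all _ fun ω => ?_)
  simpa only [card_range] using
    hconv.map_sum_div_card_le (nonempty_range_iff.2 hd) fun j _ => Set.mem_univ (Y j ω)
end

section
/- Fix p > 0 and r > 0 with r/p < 1. Let X = (X_1, …, X_d) be a random vector with i.i.d. components distributed as a real random variable X with E|X|^p < ∞, and set μ_p = E|X|^p. Then E‖X‖_p^r / d^{r/p} → μ_p^{r/p} as d → ∞. -/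
/-! With `Y_j = |X_j|^p`, `S_d = Y_1 + ⋯ + Y_d` and `s = r/p ∈ (0, 1]`, the quantity is
`E[(S_d/d)^s]`. By the L¹ strong law `S_d/d → μ_p` in L¹, and since `t ↦ t^s` is `s`-Hölder and
concave on `[0, ∞)`, `|E[(S_d/d)^s] - μ_p^s| ≤ E|S_d/d - μ_p|^s ≤ (E|S_d/d - μ_p|)^s → 0`. -/

open MeasureTheory ProbabilityTheory Filter Finset
open scoped Topology

lemma Real.abs_rpow_sub_rpow_le {s x y : ℝ} (hs0 : 0 ≤ s) (hs1 : s ≤ 1) (hx : 0 ≤ x)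
    (hy : 0 ≤ y) : |x ^ s - y ^ s| ≤ |x - y| ^ s := by
  wlog hyx : y ≤ x generalizing x y
  · rw [abs_sub_comm, abs_sub_comm x]
    exact this hy hx (le_of_not_ge hyx)
  have hsub : x ^ s ≤ y ^ s + (x - y) ^ s := by
    simpa using Real.rpow_add_le_add_rpow hy (sub_nonneg.2 hyx) hs0 hs1
  rw [abs_of_nonneg (sub_nonneg.2 (Real.rpow_le_rpow hy hyx hs0)),
    abs_of_nonneg (sub_nonneg.2 hyx)]
  linarith

section Integral

variable {α : Type*} [MeasurableSpace α] {μ : Measure α} {f g : α → ℝ} {s : ℝ}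

lemma MeasureTheory.Integrable.abs_rpow [IsFiniteMeasure μ] (hf : Integrable f μ) (hs0 : 0 < s)
    (hs1 : s ≤ 1) : Integrable (fun x => |f x| ^ s) μ := by
  have h := ((memLp_one_iff_integrable.2 hf).mono_exponent (ENNReal.ofReal_le_one.2 hs1)).norm_rpow
    (by simpa using hs0) ENNReal.ofReal_ne_top
  simpa [ENNReal.toReal_ofReal hs0.le] using h.integrable le_rfl

lemma integral_abs_rpow_le [IsProbabilityMeasure μ] (hf : Integrable f μ) (hs0 : 0 < s)
    (hs1 : s ≤ 1) : ∫ x, |f x| ^ s ∂μ ≤ (∫ x, |f x| ∂μ) ^ s :=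
  (Real.concaveOn_rpow hs0.le hs1).le_map_integral
    (continuousOn_id.rpow_const fun _ _ => Or.inr hs0.le) isClosed_Ici
    (ae_of_all _ fun x => abs_nonneg (f x)) hf.abs (hf.abs_rpow hs0 hs1)

lemma abs_integral_rpow_sub_integral_rpow_le [IsProbabilityMeasure μ] (hf : Integrable f μ)
    (hg : Integrable g μ) (hf0 : 0 ≤ f) (hg0 : 0 ≤ g) (hs0 : 0 < s) (hs1 : s ≤ 1) :
    |∫ x, f x ^ s ∂μ - ∫ x, g x ^ s ∂μ| ≤ (∫ x, |f x - g x| ∂μ) ^ s := by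
  have hfs : Integrable (fun x => f x ^ s) μ := by
    simpa [abs_of_nonneg (hf0 _)] using hf.abs_rpow hs0 hs1
  have hgs : Integrable (fun x => g x ^ s) μ := by
    simpa [abs_of_nonneg (hg0 _)] using hg.abs_rpow hs0 hs1
  calc |∫ x, f x ^ s ∂μ - ∫ x, g x ^ s ∂μ|
      = |∫ x, (f x ^ s - g x ^ s) ∂μ| := by rw [integral_sub hfs hgs]
    _ ≤ ∫ x, |f x ^ s - g x ^ s| ∂μ := abs_integral_le_integral_abs
    _ ≤ ∫ x, |f x - g x| ^ s ∂μ :=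
        integral_mono (hfs.sub hgs).abs ((hf.sub hg).abs_rpow hs0 hs1) fun x =>
          Real.abs_rpow_sub_rpow_le hs0.le hs1 (hf0 x) (hg0 x)
    _ ≤ (∫ x, |f x - g x| ∂μ) ^ s := integral_abs_rpow_le (hf.sub hg) hs0 hs1

lemma tendsto_integral_rpow_of_tendsto_integral_abs_sub [IsProbabilityMeasure μ]
    {F : ℕ → α → ℝ} (hF : ∀ n, Integrable (F n) μ) (hg : Integrable g μ) (hF0 : ∀ n, 0 ≤ F n)
    (hg0 : 0 ≤ g) (hlim : Tendsto (fun n => ∫ x, |F n x - g x| ∂μ) atTop (𝓝 0))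
    (hs0 : 0 < s) (hs1 : s ≤ 1) :
    Tendsto (fun n => ∫ x, F n x ^ s ∂μ) atTop (𝓝 (∫ x, g x ^ s ∂μ)) := by
  have hlim_s : Tendsto (fun n => (∫ x, |F n x - g x| ∂μ) ^ s) atTop (𝓝 0) := by
    simpa [Real.zero_rpow hs0.ne'] using hlim.rpow_const (Or.inr hs0.le)
  rw [← tendsto_sub_nhds_zero_iff]
  exact squeeze_zero_norm (fun n => abs_integral_rpow_sub_integral_rpow_le (hF n) hg (hF0 n)
    hg0 hs0 hs1) hlim_s

end Integral

lemma tendsto_integral_abs_sampleMean_sub {Ω : Type*} [MeasurableSpace Ω] {μ : Measure Ω}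
    {Y : ℕ → Ω → ℝ} (hint : Integrable (Y 0) μ) (hindep : Pairwise fun i j => Y i ⟂ᵢ[μ] Y j)
    (hident : ∀ i, IdentDistrib (Y i) (Y 0) μ μ) :
    Tendsto (fun n : ℕ => ∫ ω, |(∑ i ∈ range n, Y i ω) / n - ∫ ω, Y 0 ω ∂μ| ∂μ) atTop (𝓝 0) := by
  have hLp := (ENNReal.tendsto_toReal ENNReal.zero_ne_top).comp
    (strong_law_Lp le_rfl ENNReal.one_ne_top Y (memLp_one_iff_integrable.2 hint) hindep hident)
  rw [ENNReal.toReal_zero] at hLp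
  refine hLp.congr fun n => ?_
  have hmeas : AEStronglyMeasurable
      (fun ω => (∑ i ∈ range n, Y i ω) / n - ∫ ω, Y 0 ω ∂μ) μ :=
    (((Finset.aemeasurable_fun_sum _ fun i _ => (hident i).aemeasurable_fst).div_const _).sub_const
      _).aestronglyMeasurable
  simp only [Function.comp_apply, eLpNorm_one_eq_lintegral_enorm, smul_eq_mul, inv_mul_eq_div,
    ← integral_norm_eq_lintegral_enorm hmeas, Real.norm_eq_abs]

theorem stmt_3_general {Ω : Type*} [MeasurableSpace Ω] (μ : Measure Ω) [IsProbabilityMeasure μ]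
    (X : ℕ → Ω → ℝ)
    (hindep : iIndepFun X μ)
    (hident : ∀ j, IdentDistrib (X j) (X 0) μ μ)
    (p r : ℝ) (hp : 0 < p) (hr : 0 < r) (hrp : r / p < 1)
    (hmom : Integrable (fun ω => |X 0 ω| ^ p) μ)
    (μp : ℝ) (hμp : μp = ∫ ω, |X 0 ω| ^ p ∂μ) :
    Tendsto
      (fun d : ℕ =>
        (∫ ω, ((∑ j ∈ Finset.range d, |X j ω| ^ p) ^ (1 / p)) ^ r ∂μ) / (d : ℝ) ^ (r / p))
      atTop (nhds (μp ^ (r / p))) := by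
  subst hμp
  have hs : 0 < r / p := div_pos hr hp
  have hpow : Measurable fun x : ℝ => |x| ^ p := measurable_abs.pow_const p
  set Y : ℕ → Ω → ℝ := fun j ω => |X j ω| ^ p
  have hY0 : ∀ j, 0 ≤ Y j := fun j ω => Real.rpow_nonneg (abs_nonneg _) p
  have hYident : ∀ j, IdentDistrib (Y j) (Y 0) μ μ := fun j => (hident j).comp hpow
  have hmean : ∀ n : ℕ, Integrable (fun ω => (∑ j ∈ range n, Y j ω) / n) μ := fun n =>
    (integrable_finsetSum _ fun j _ => (hYident j).integrable_iff.2 hmom).div_const _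
  have hL1 := tendsto_integral_abs_sampleMean_sub hmom
    (fun i j hij => (hindep.indepFun hij).comp hpow hpow) hYident
  have hlim := tendsto_integral_rpow_of_tendsto_integral_abs_sub hmean (integrable_const _)
    (fun n ω => div_nonneg (sum_nonneg fun j _ => hY0 j ω) n.cast_nonneg)
    (fun _ => integral_nonneg (hY0 0)) hL1 hs hrp.le
  rw [integral_const, probReal_univ, one_smul] at hlim
  refine hlim.congr fun d => ?_
  rw [← integral_div]
  refine integral_congr_ae (ae_of_all _ fun ω => ?_)
  have hsum : 0 ≤ ∑ j ∈ range d, Y j ω := sum_nonneg fun j _ => hY0 j ω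
  dsimp only
  rw [Real.div_rpow hsum d.cast_nonneg, ← Real.rpow_mul hsum, one_div_mul_eq_div]

/-- Fix `p > 0`, `r > 0` with `r/p < 1`.  `X = (X_1, …, X_d)` has i.i.d.
components distributed as `X` with `E|X|^p < ∞`, `μ_p = E|X|^p`.  Then
`E‖X‖_p^r / d^{r/p} → μ_p^{r/p}` as `d → ∞`, where `‖x‖_p = (∑_{j<d} |x_j|^p)^{1/p}`. -/
theorem stmt_3 {Ω : Type*} [MeasurableSpace Ω] (μ : Measure Ω) [IsProbabilityMeasure μ]
    (X : ℕ → Ω → ℝ)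
    (hXmeas : ∀ j, Measurable (X j))
    (hindep : iIndepFun X μ)
    (hident : ∀ j, IdentDistrib (X j) (X 0) μ μ)
    (p r : ℝ) (hp : 0 < p) (hr : 0 < r) (hrp : r / p < 1)
    (hmom : Integrable (fun ω => |X 0 ω| ^ p) μ)
    (μp : ℝ) (hμp : μp = ∫ ω, |X 0 ω| ^ p ∂μ) :
    Tendsto
      (fun d : ℕ =>
        (∫ ω, ((∑ j ∈ Finset.range d, |X j ω| ^ p) ^ (1 / p)) ^ r ∂μ) / (d : ℝ) ^ (r / p))
      atTop (nhds (μp ^ (r / p))) :=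
  stmt_3_general μ X hindep hident p r hp hr hrp hmom μp hμp
end

section
/- Fix p > 0 and r > 0 with r/p < 1. Let X = (X_1, …, X_d) be a random vector with i.i.d. components distributed as a real random variable X with E|X|^p = ∞. Then E‖X‖_p^r / d^{r/p} → ∞ as d → ∞. -/
open MeasureTheory ProbabilityTheory Filter Finset Function
open scoped ENNReal Topology

/-! Put `Y_j = |X_j|^p`, so that `‖X‖_p^r / d^{r/p} = (S_d / d)^{r/p}` with
`S_d = Y_0 + ⋯ + Y_{d-1}`. For each level `M`, the strong law applied to the truncations
`min Y_j M` gives `liminf S_d / d ≥ E[min Y M]`, and these expectations increase to `E Y = ∞`;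
hence `S_d / d → ∞` almost surely, and Fatou's lemma turns this into divergence of the
expectations. -/

section

variable {Ω : Type*} {mΩ : MeasurableSpace Ω} {μ : Measure Ω}

theorem integrable_min_natCast [IsFiniteMeasure μ] {f : Ω → ℝ} (hf : AEMeasurable f μ)
    (hf0 : 0 ≤ f) (M : ℕ) : Integrable (fun ω => min (f ω) M) μ :=
  .of_bound (hf.min aemeasurable_const).aestronglyMeasurable M <| ae_of_all _ fun ω => by
    rw [Real.norm_of_nonneg (le_min (hf0 ω) M.cast_nonneg)]
    exact min_le_right _ _

theorem tendsto_integral_min_natCast_atTop [IsFiniteMeasure μ] {f : Ω → ℝ}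
    (hf : AEMeasurable f μ) (hf0 : 0 ≤ f) (htop : ∫⁻ ω, ENNReal.ofReal (f ω) ∂μ = ∞) :
    Tendsto (fun M : ℕ => ∫ ω, min (f ω) M ∂μ) atTop atTop := by
  rw [← ENNReal.tendsto_ofReal_nhds_top, ← htop]
  simp_rw [ofReal_integral_eq_lintegral_ofReal (integrable_min_natCast hf hf0 _)
    (ae_of_all _ fun ω => le_min (hf0 ω) (Nat.cast_nonneg _))]
  refine lintegral_tendsto_of_tendsto_of_monotone
    (fun M => (hf.min aemeasurable_const).ennreal_ofReal)
    (ae_of_all _ fun ω M N hMN =>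
      ENNReal.ofReal_le_ofReal (min_le_min_left _ (by exact_mod_cast hMN)))
    (ae_of_all _ fun ω => ?_)
  refine tendsto_const_nhds.congr' ?_
  filter_upwards [eventually_ge_atTop ⌈f ω⌉₊] with M hM
  rw [min_eq_left ((Nat.le_ceil _).trans (by exact_mod_cast hM))]

theorem tendsto_lintegral_nhds_top_of_ae_tendsto [NeZero μ] {f : ℕ → Ω → ℝ≥0∞}
    (hf : ∀ n, AEMeasurable (f n) μ)
    (h : ∀ᵐ ω ∂μ, Tendsto (fun n => f n ω) atTop (𝓝 ∞)) :
    Tendsto (fun n => ∫⁻ ω, f n ω ∂μ) atTop (𝓝 ∞) := by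
  refine tendsto_of_le_liminf_of_limsup_le ?_ le_top
  calc ∞ = ∫⁻ ω, liminf (fun n => f n ω) atTop ∂μ := by
        rw [lintegral_congr_ae (h.mono fun ω hω => hω.liminf_eq), lintegral_const,
          ENNReal.top_mul (NeZero.ne _)]
    _ ≤ _ := lintegral_liminf_le' hf

theorem ae_tendsto_average_atTop_of_lintegral_eq_top [IsFiniteMeasure μ] {Y : ℕ → Ω → ℝ}
    (hY0 : ∀ j, 0 ≤ Y j) (hindep : Pairwise ((· ⟂ᵢ[μ] ·) on Y))
    (hident : ∀ j, IdentDistrib (Y j) (Y 0) μ μ)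
    (htop : ∫⁻ ω, ENNReal.ofReal (Y 0 ω) ∂μ = ∞) :
    ∀ᵐ ω ∂μ, Tendsto (fun d : ℕ => (∑ j ∈ range d, Y j ω) / d) atTop atTop := by
  have htrunc (M : ℕ) : Measurable fun y : ℝ => min y M := measurable_id.min measurable_const
  have hslln (M : ℕ) := strong_law_ae_real (μ := μ) (fun j ω => min (Y j ω) M)
    (integrable_min_natCast (hident 0).aemeasurable_fst (hY0 0) M)
    (fun i j hij => (hindep hij).comp (htrunc M) (htrunc M))
    (fun j => (hident j).comp (htrunc M))
  filter_upwards [ae_all_iff.2 hslln] with ω hω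
  refine tendsto_atTop.2 fun B => ?_
  obtain ⟨M, hM⟩ := ((tendsto_integral_min_natCast_atTop (hident 0).aemeasurable_fst (hY0 0)
    htop).eventually_gt_atTop B).exists
  filter_upwards [(hω M).eventually (lt_mem_nhds hM)] with d hd
  exact hd.le.trans <|
    div_le_div_of_nonneg_right (sum_le_sum fun j _ => min_le_left _ _) d.cast_nonneg

end

theorem stmt_4_general {Ω : Type*} [MeasurableSpace Ω] (μ : Measure Ω) [IsProbabilityMeasure μ]
    (X : ℕ → Ω → ℝ)
    (hindep : iIndepFun X μ)
    (hident : ∀ j, IdentDistrib (X j) (X 0) μ μ)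
    (p r : ℝ) (hp : 0 < p) (hr : 0 < r)
    (hmom : ∫⁻ ω, ENNReal.ofReal (|X 0 ω| ^ p) ∂μ = ⊤) :
    Tendsto
      (fun d : ℕ =>
        (∫⁻ ω, ENNReal.ofReal (((∑ j ∈ Finset.range d, |X j ω| ^ p) ^ (1 / p)) ^ r) ∂μ) /
          ENNReal.ofReal ((d : ℝ) ^ (r / p)))
      atTop (nhds (⊤ : ENNReal)) := by
  have hq : 0 < r / p := div_pos hr hp
  have hpow : Measurable fun x : ℝ => |x| ^ p := by fun_prop
  have havg := ae_tendsto_average_atTop_of_lintegral_eq_top (Y := fun j ω => |X j ω| ^ p)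
    (fun j ω => by positivity) (fun i j hij => (hindep.indepFun hij).comp hpow hpow)
    (fun j => (hident j).comp hpow) hmom
  have hmeas (d : ℕ) : AEMeasurable
      (fun ω => ENNReal.ofReal (((∑ j ∈ range d, |X j ω| ^ p) / d) ^ (r / p))) μ := by
    have := fun j => (hident j).aemeasurable_fst
    fun_prop
  refine (tendsto_lintegral_nhds_top_of_ae_tendsto hmeas <| havg.mono fun ω hω =>
    ENNReal.tendsto_ofReal_nhds_top.2 ((tendsto_rpow_atTop hq).comp hω)).congr' ?_
  filter_upwards [eventually_gt_atTop 0] with d hd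
  have hdq : 0 < (d : ℝ) ^ (r / p) := by positivity
  rw [ENNReal.div_eq_inv_mul, ← lintegral_const_mul' _ _ (ENNReal.inv_ne_top.2 (by positivity))]
  refine lintegral_congr fun ω => ?_
  have hS : 0 ≤ ∑ j ∈ range d, |X j ω| ^ p := by positivity
  rw [← Real.rpow_mul hS, one_div_mul_eq_div, Real.div_rpow hS d.cast_nonneg,
    ENNReal.ofReal_div_of_pos hdq, ENNReal.div_eq_inv_mul]

/-- Fix `p > 0`, `r > 0` with `r/p < 1`.  `X = (X_1, …, X_d)` has i.i.d.
components distributed as `X` with `E|X|^p = ∞`.  Then `E‖X‖_p^r / d^{r/p} → ∞`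
as `d → ∞` (expectations taken in `[0, ∞]`). -/
theorem stmt_4 {Ω : Type*} [MeasurableSpace Ω] (μ : Measure Ω) [IsProbabilityMeasure μ]
    (X : ℕ → Ω → ℝ)
    (hXmeas : ∀ j, Measurable (X j))
    (hindep : iIndepFun X μ)
    (hident : ∀ j, IdentDistrib (X j) (X 0) μ μ)
    (p r : ℝ) (hp : 0 < p) (hr : 0 < r) (hrp : r / p < 1)
    (hmom : ∫⁻ ω, ENNReal.ofReal (|X 0 ω| ^ p) ∂μ = ⊤) :
    Tendsto
      (fun d : ℕ =>
        (∫⁻ ω, ENNReal.ofReal (((∑ j ∈ Finset.range d, |X j ω| ^ p) ^ (1 / p)) ^ r) ∂μ) /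
          ENNReal.ofReal ((d : ℝ) ^ (r / p)))
      atTop (nhds (⊤ : ENNReal)) :=
  stmt_4_general μ X hindep hident p r hp hr hmom
end

section
/- Fix p > 0 and r > 0 with r/p ≥ 1. Let X = (X_1, …, X_d) be a random vector with i.i.d. components distributed as a real random variable X with E|X|^r < ∞, and set μ_p = E|X|^p. Then E‖X‖_p^r / d^{r/p} → μ_p^{r/p} as d → ∞. -/
/-! With `Yⱼ = |Xⱼ|^p` and `q = r/p ≥ 1`, the quantity in question is `E|(Y₁ + ⋯ + Y_d)/d|^q`,
the `q`-th moment of an empirical mean. The `Lq` strong law of large numbers makes these means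
converge to `E Y₁ = μ_p` in `Lq`, and convergence in `Lq` carries the `q`-th moments along. -/

open MeasureTheory ProbabilityTheory Filter Topology Finset
open scoped ENNReal

theorem rpow_one_div_rpow_div_rpow_eq {s t : ℝ} (hs : 0 ≤ s) (ht : 0 ≤ t) (p r : ℝ) :
    (s ^ (1 / p)) ^ r / t ^ (r / p) = (t⁻¹ * s) ^ (r / p) := by
  rw [← Real.rpow_mul hs, one_div_mul_eq_div, Real.mul_rpow (inv_nonneg.2 ht) hs,
    Real.inv_rpow ht, inv_mul_eq_div]

section Moments

variable {α E : Type*} {m : MeasurableSpace α} {μ : Measure α} [NormedAddCommGroup E]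

theorem MemLp.toReal_eLpNorm_rpow_eq_integral_norm_rpow {f : α → E} {q : ℝ} (hq : 0 < q)
    (hf : MemLp f (ENNReal.ofReal q) μ) :
    (eLpNorm f (ENNReal.ofReal q) μ).toReal ^ q = ∫ a, ‖f a‖ ^ q ∂μ := by
  have hint : 0 ≤ ∫ a, ‖f a‖ ^ q ∂μ := integral_nonneg fun a => by positivity
  rw [hf.eLpNorm_eq_integral_rpow_norm (by simpa using hq) ENNReal.ofReal_ne_top,
    ENNReal.toReal_ofReal hq.le, ENNReal.toReal_ofReal (by positivity), ← Real.rpow_mul hint,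
    inv_mul_cancel₀ hq.ne', Real.rpow_one]

theorem tendsto_integral_norm_rpow_of_tendsto_eLpNorm_sub {ι : Type*} {l : Filter ι} {q : ℝ}
    (hq : 1 ≤ q) {F : ι → α → E} {f : α → E} (hF : ∀ i, MemLp (F i) (ENNReal.ofReal q) μ)
    (hf : MemLp f (ENNReal.ofReal q) μ)
    (h : Tendsto (fun i => eLpNorm (F i - f) (ENNReal.ofReal q) μ) l (𝓝 0)) :
    Tendsto (fun i => ∫ a, ‖F i a‖ ^ q ∂μ) l (𝓝 (∫ a, ‖f a‖ ^ q ∂μ)) := by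
  have hq0 : 0 < q := zero_lt_one.trans_le hq
  have : Fact (1 ≤ ENNReal.ofReal q) := ⟨by simpa using hq⟩
  have hLp : Tendsto (fun i => (hF i).toLp (F i)) l (𝓝 (hf.toLp f)) :=
    (Lp.tendsto_Lp_iff_tendsto_eLpNorm'' F hF f hf).2 h
  have hnorm := hLp.norm.rpow_const (Or.inr hq0.le)
  simp only [Lp.norm_toLp] at hnorm
  simpa only [MemLp.toReal_eLpNorm_rpow_eq_integral_norm_rpow hq0, hF, hf] using hnorm

theorem memLp_abs_rpow_of_integrable_abs_rpow {f : α → ℝ} (hf : AEStronglyMeasurable f μ)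
    {p r : ℝ} (hp : 0 < p) (hrp : 0 < r / p) (hint : Integrable (fun a => |f a| ^ r) μ) :
    MemLp (fun a => |f a| ^ p) (ENNReal.ofReal (r / p)) μ := by
  have hmeas : AEStronglyMeasurable (fun a => |f a| ^ p) μ :=
    (continuous_abs.rpow_const fun _ => Or.inr hp.le).comp_aestronglyMeasurable hf
  refine (integrable_norm_rpow_iff hmeas (by simpa using hrp) ENNReal.ofReal_ne_top).1 ?_
  refine hint.congr (ae_of_all _ fun a => ?_)
  dsimp only
  rw [ENNReal.toReal_ofReal hrp.le, Real.norm_of_nonneg (by positivity),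
    ← Real.rpow_mul (abs_nonneg _), mul_div_cancel₀ r hp.ne']

end Moments

theorem tendsto_integral_norm_rpow_average {Ω E : Type*} {mΩ : MeasurableSpace Ω}
    {μ : Measure Ω} [IsProbabilityMeasure μ] [NormedAddCommGroup E] [NormedSpace ℝ E]
    [CompleteSpace E] [MeasurableSpace E] [BorelSpace E] {q : ℝ} (hq : 1 ≤ q) (Y : ℕ → Ω → E)
    (hY : MemLp (Y 0) (ENNReal.ofReal q) μ) (hindep : Pairwise fun i j => Y i ⟂ᵢ[μ] Y j)
    (hident : ∀ i, IdentDistrib (Y i) (Y 0) μ μ) :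
    Tendsto (fun n : ℕ => ∫ ω, ‖(n : ℝ)⁻¹ • ∑ i ∈ range n, Y i ω‖ ^ q ∂μ) atTop
      (𝓝 (‖μ[Y 0]‖ ^ q)) := by
  have hYi (i : ℕ) : MemLp (Y i) (ENNReal.ofReal q) μ := (hident i).memLp_iff.2 hY
  have hmean (n : ℕ) :
      MemLp (fun ω => (n : ℝ)⁻¹ • ∑ i ∈ range n, Y i ω) (ENNReal.ofReal q) μ :=
    (memLp_finsetSum (range n) fun i _ => hYi i).const_smul (n : ℝ)⁻¹
  have hLLN := strong_law_Lp (by simpa using hq) ENNReal.ofReal_ne_top Y hY hindep hident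
  -- `hLLN` is elaborated only once `F` is known: unifying it with `F n - f` first times out.
  have := tendsto_integral_norm_rpow_of_tendsto_eLpNorm_sub hq hmean (memLp_const (μ[Y 0]))
    (by exact hLLN)
  rwa [integral_const, probReal_univ, one_smul] at this

theorem stmt_5_general {Ω : Type*} [MeasurableSpace Ω] (μ : Measure Ω) [IsProbabilityMeasure μ]
    (X : ℕ → Ω → ℝ)
    (hindep : iIndepFun X μ)
    (hident : ∀ j, IdentDistrib (X j) (X 0) μ μ)
    (p r : ℝ) (hp : 0 < p) (hrp : 1 ≤ r / p)
    (hmom : Integrable (fun ω => |X 0 ω| ^ r) μ)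
    (μp : ℝ) (hμp : μp = ∫ ω, |X 0 ω| ^ p ∂μ) :
    Tendsto
      (fun d : ℕ =>
        (∫ ω, ((∑ j ∈ Finset.range d, |X j ω| ^ p) ^ (1 / p)) ^ r ∂μ) / (d : ℝ) ^ (r / p))
      atTop (nhds (μp ^ (r / p))) := by
  have hg : Measurable fun x : ℝ => |x| ^ p := by fun_prop
  have hY : MemLp (fun ω => |X 0 ω| ^ p) (ENNReal.ofReal (r / p)) μ :=
    memLp_abs_rpow_of_integrable_abs_rpow (hident 0).aemeasurable_fst.aestronglyMeasurable hp
      (zero_lt_one.trans_le hrp) hmom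
  have hLLN := tendsto_integral_norm_rpow_average hrp (fun j ω => |X j ω| ^ p) hY
    (fun i j hij => (hindep.comp _ fun _ => hg).indepFun hij) fun j => (hident j).comp hg
  have hmean : ‖μ[fun ω => |X 0 ω| ^ p]‖ = μp := by
    rw [hμp, Real.norm_of_nonneg (integral_nonneg fun ω => by positivity)]
  rw [hmean] at hLLN
  refine hLLN.congr fun d => ?_
  rw [← integral_div]
  refine integral_congr_ae (ae_of_all _ fun ω => ?_)
  have hsum : 0 ≤ ∑ j ∈ range d, |X j ω| ^ p := sum_nonneg fun j _ => by positivity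
  simp only [smul_eq_mul, Real.norm_of_nonneg (mul_nonneg (inv_nonneg.2 d.cast_nonneg) hsum)]
  exact (rpow_one_div_rpow_div_rpow_eq hsum d.cast_nonneg p r).symm

/-- Fix `p > 0`, `r > 0` with `r/p ≥ 1`.  `X = (X_1, …, X_d)` has i.i.d.
components distributed as `X` with `E|X|^r < ∞`, `μ_p = E|X|^p`.  Then
`E‖X‖_p^r / d^{r/p} → μ_p^{r/p}` as `d → ∞`, where `‖x‖_p = (∑_{j<d} |x_j|^p)^{1/p}`. -/
theorem stmt_5 {Ω : Type*} [MeasurableSpace Ω] (μ : Measure Ω) [IsProbabilityMeasure μ]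
    (X : ℕ → Ω → ℝ)
    (hXmeas : ∀ j, Measurable (X j))
    (hindep : iIndepFun X μ)
    (hident : ∀ j, IdentDistrib (X j) (X 0) μ μ)
    (p r : ℝ) (hp : 0 < p) (hr : 0 < r) (hrp : 1 ≤ r / p)
    (hmom : Integrable (fun ω => |X 0 ω| ^ r) μ)
    (μp : ℝ) (hμp : μp = ∫ ω, |X 0 ω| ^ p ∂μ) :
    Tendsto
      (fun d : ℕ =>
        (∫ ω, ((∑ j ∈ Finset.range d, |X j ω| ^ p) ^ (1 / p)) ^ r ∂μ) / (d : ℝ) ^ (r / p))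
      atTop (nhds (μp ^ (r / p))) :=
  stmt_5_general μ X hindep hident p r hp hrp hmom μp hμp
end

section
/- Fix p > 0 and assume 0 < E|X|^m < ∞ for m = max(2, p). Then, as d → ∞, E‖X‖_p / d^{1/p} → μ_p^{1/p} and E‖X‖_p² / d^{2/p} → μ_p^{2/p}, and consequently √(Var ‖X‖_p) / E‖X‖_p → 0. -/
/-!
Put `Y_j = |X_j|^p` and `T_d = d⁻¹ ∑_{j<d} Y_j`, so that `‖X‖_p = d^{1/p} T_d^{1/p}`. The `Y_j`
are i.i.d. with a finite moment of order `q = max(2, p)/p ≥ 1`, so the `L^q` strong law gives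
`T_d → μ_p` in `L^q`, hence in `L^r` for every `r ≤ q`, and therefore `E T_d^r → μ_p^r`. The
exponents `r = 1/p` and `r = 2/p` give the first two limits. Dividing the variance by `d^{2/p}`
then leaves `μ_p^{2/p} - (μ_p^{1/p})^2 = 0`, while `E‖X‖_p / d^{1/p} → μ_p^{1/p} > 0`.
-/

open MeasureTheory ProbabilityTheory Filter Topology

lemma Real.abs_rpow_sub_rpow_le_s7 {a c r : ℝ} (ha : 0 ≤ a) (hc : 0 ≤ c) (hr₀ : 0 ≤ r)
    (hr₁ : r ≤ 1) : |a ^ r - c ^ r| ≤ |a - c| ^ r := by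
  wlog hca : c ≤ a generalizing a c
  · rw [abs_sub_comm, abs_sub_comm a]
    exact this hc ha (le_of_not_ge hca)
  have hsub : a ^ r ≤ (a - c) ^ r + c ^ r := by
    simpa using Real.rpow_add_le_add_rpow (sub_nonneg.2 hca) hc hr₀ hr₁
  rw [abs_of_nonneg (sub_nonneg.2 (Real.rpow_le_rpow hc hca hr₀)),
    abs_of_nonneg (sub_nonneg.2 hca)]
  linarith

lemma Real.rpow_one_div_sq {x : ℝ} (hx : 0 ≤ x) (p : ℝ) : (x ^ (1 / p)) ^ 2 = x ^ (2 / p) := by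
  rw [← Real.rpow_mul_natCast hx]
  ring_nf

lemma abs_lpNorm_sub_lpNorm_le {α E : Type*} [MeasurableSpace α] [NormedAddCommGroup E]
    {μ : Measure α} {p : ENNReal} {f g : α → E} (hf : MemLp f p μ) (hg : MemLp g p μ)
    (hp : 1 ≤ p) : |lpNorm f p μ - lpNorm g p μ| ≤ lpNorm (f - g) p μ := by
  rw [abs_sub_le_iff]
  constructor
  · linarith [lpNorm_le_lpNorm_add_lpNorm_sub' hg hp (f := f)]
  · linarith [lpNorm_le_lpNorm_add_lpNorm_sub hf hp (f := g)]

section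

variable {Ω : Type*} [MeasurableSpace Ω] {μ : Measure Ω}

lemma integral_abs_rpow_eq_lpNorm_rpow {f : Ω → ℝ} {r : ℝ} (hf : AEStronglyMeasurable f μ)
    (hr : 0 < r) : ∫ ω, |f ω| ^ r ∂μ = lpNorm f (ENNReal.ofReal r) μ ^ r := by
  rw [lpNorm_eq_integral_norm_rpow_toReal (by simpa using hr) ENNReal.ofReal_ne_top hf,
    ENNReal.toReal_ofReal hr.le, Real.rpow_inv_rpow (by positivity) hr.ne']
  rfl

lemma integral_abs_rpow_pos_iff {f : Ω → ℝ} {p : ℝ} (hp : 0 < p)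
    (hint : Integrable (fun ω => |f ω| ^ p) μ) :
    0 < ∫ ω, |f ω| ^ p ∂μ ↔ ¬ f =ᵐ[μ] 0 := by
  have hnonneg : 0 ≤ fun ω => |f ω| ^ p := fun ω => by positivity
  rw [(integral_nonneg hnonneg).lt_iff_ne', ne_eq, integral_eq_zero_iff_of_nonneg hnonneg hint]
  refine not_congr (eventually_congr (.of_forall fun ω => ?_))
  simp [Real.rpow_eq_zero (abs_nonneg _) hp.ne']

lemma memLp_abs_rpow_of_integrable {f : Ω → ℝ} {p m : ℝ} (hf : AEStronglyMeasurable f μ)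
    (hp : 0 < p) (hm : 0 < m) (hint : Integrable (fun ω => |f ω| ^ m) μ) :
    MemLp (fun ω => |f ω| ^ p) (ENNReal.ofReal (m / p)) μ := by
  refine (integrable_norm_rpow_iff ?_ (by simpa using div_pos hm hp) ENNReal.ofReal_ne_top).1 ?_
  · exact (hf.norm.aemeasurable.pow_const p).aestronglyMeasurable
  refine hint.congr (.of_forall fun ω => ?_)
  dsimp only
  rw [ENNReal.toReal_ofReal (div_pos hm hp).le, Real.norm_eq_abs,
    abs_of_nonneg (Real.rpow_nonneg (abs_nonneg (f ω)) p), ← Real.rpow_mul (abs_nonneg _),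
    mul_div_cancel₀ _ hp.ne']

lemma memLp_two_rpow_one_div {f : Ω → ℝ} {p : ℝ} (hp : 0 < p) (hf : ∀ ω, 0 ≤ f ω)
    (hmem : MemLp f (ENNReal.ofReal (2 / p)) μ) : MemLp (fun ω => f ω ^ (1 / p)) 2 μ := by
  refine (memLp_two_iff_integrable_sq
    (hmem.aestronglyMeasurable.aemeasurable.pow_const _).aestronglyMeasurable).2 ?_
  refine (hmem.integrable_norm_rpow (ENNReal.ofReal_pos.2 (by positivity)).ne'
    ENNReal.ofReal_ne_top).congr (.of_forall fun ω => ?_)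
  dsimp only
  rw [Real.norm_eq_abs, abs_of_nonneg (hf ω), ENNReal.toReal_ofReal (by positivity),
    Real.rpow_one_div_sq (hf ω)]

variable [IsProbabilityMeasure μ]

lemma tendsto_integral_rpow_of_tendsto_lpNorm_sub {ι : Type*} {l : Filter ι} {T : ι → Ω → ℝ}
    {c r : ℝ} (hT : ∀ i ω, 0 ≤ T i ω) (hc : 0 ≤ c) (hr : 0 < r)
    (hmem : ∀ i, MemLp (T i) (ENNReal.ofReal r) μ)
    (hlim : Tendsto (fun i => lpNorm (fun ω => T i ω - c) (ENNReal.ofReal r) μ) l (𝓝 0)) :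
    Tendsto (fun i => ∫ ω, T i ω ^ r ∂μ) l (𝓝 (c ^ r)) := by
  have hr₀ : ENNReal.ofReal r ≠ 0 := (ENNReal.ofReal_pos.2 hr).ne'
  rcases le_or_gt 1 r with hr₁ | hr₁
  · -- for `r ≥ 1`, `lpNorm` is a norm, hence continuous
    have hmoment : ∀ i, ∫ ω, T i ω ^ r ∂μ = lpNorm (T i) (ENNReal.ofReal r) μ ^ r := fun i => by
      rw [← integral_abs_rpow_eq_lpNorm_rpow (hmem i).aestronglyMeasurable hr]
      simp_rw [abs_of_nonneg (hT i _)]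
    have hconst : lpNorm (fun _ => c) (ENNReal.ofReal r) μ = c := by
      rw [lpNorm_const hr₀ (IsProbabilityMeasure.ne_zero μ)]
      simp [abs_of_nonneg hc]
    have hnorm : Tendsto (fun i => lpNorm (T i) (ENNReal.ofReal r) μ) l (𝓝 c) := by
      rw [tendsto_iff_norm_sub_tendsto_zero]
      refine squeeze_zero (fun _ => norm_nonneg _) (fun i => ?_) hlim
      have := abs_lpNorm_sub_lpNorm_le (hmem i) (memLp_const c) (by simpa using hr₁)
      rwa [hconst] at this
    simpa only [hmoment] using hnorm.rpow_const (Or.inr hr.le)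
  · -- for `r < 1`, `x ↦ x ^ r` is `r`-Hölder continuous
    have hbound : ∀ i, ‖∫ ω, T i ω ^ r ∂μ - c ^ r‖ ≤
        lpNorm (fun ω => T i ω - c) (ENNReal.ofReal r) μ ^ r := fun i => by
      have hint : Integrable (fun ω => T i ω ^ r) μ := by
        simpa [abs_of_nonneg (hT i _), ENNReal.toReal_ofReal hr.le] using
          (hmem i).integrable_norm_rpow hr₀ ENNReal.ofReal_ne_top
      have hint_sub : Integrable (fun ω => |T i ω - c| ^ r) μ := by
        simpa [ENNReal.toReal_ofReal hr.le] using
          ((hmem i).sub (memLp_const c)).integrable_norm_rpow hr₀ ENNReal.ofReal_ne_top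
      calc ‖∫ ω, T i ω ^ r ∂μ - c ^ r‖ = ‖∫ ω, (T i ω ^ r - c ^ r) ∂μ‖ := by
            rw [integral_sub hint (integrable_const _), integral_const]; simp
        _ ≤ ∫ ω, |T i ω - c| ^ r ∂μ := norm_integral_le_of_norm_le hint_sub
            (.of_forall fun ω => Real.abs_rpow_sub_rpow_le_s7 (hT i ω) hc hr.le hr₁.le)
        _ = _ := integral_abs_rpow_eq_lpNorm_rpow
            ((hmem i).aestronglyMeasurable.sub aestronglyMeasurable_const) hr
    rw [tendsto_iff_norm_sub_tendsto_zero]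
    refine squeeze_zero (fun _ => norm_nonneg _) hbound ?_
    simpa [Real.zero_rpow hr.ne'] using hlim.rpow_const (Or.inr hr.le)

lemma tendsto_integral_rpow_sum_div_rpow {Y : ℕ → Ω → ℝ} {q r : ℝ} (hY : ∀ i ω, 0 ≤ Y i ω)
    (hq : 1 ≤ q) (hmem : MemLp (Y 0) (ENNReal.ofReal q) μ)
    (hindep : Pairwise fun i j => Y i ⟂ᵢ[μ] Y j) (hident : ∀ i, IdentDistrib (Y i) (Y 0) μ μ)
    (hr : 0 < r) (hrq : r ≤ q) :
    Tendsto (fun n : ℕ => (∫ ω, (∑ i ∈ Finset.range n, Y i ω) ^ r ∂μ) / (n : ℝ) ^ r) atTop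
      (𝓝 ((∫ ω, Y 0 ω ∂μ) ^ r)) := by
  set T : ℕ → Ω → ℝ := fun n ω => (n : ℝ)⁻¹ * ∑ i ∈ Finset.range n, Y i ω
  have hrescale : ∀ n : ℕ,
      (∫ ω, (∑ i ∈ Finset.range n, Y i ω) ^ r ∂μ) / (n : ℝ) ^ r = ∫ ω, T n ω ^ r ∂μ := by
    intro n
    simp_rw [T, Real.mul_rpow (inv_nonneg.2 n.cast_nonneg)
      (Finset.sum_nonneg fun i _ => hY i _), Real.inv_rpow n.cast_nonneg, integral_const_mul,
      div_eq_inv_mul]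
  have hT : ∀ n ω, 0 ≤ T n ω := fun n ω =>
    mul_nonneg (inv_nonneg.2 n.cast_nonneg) (Finset.sum_nonneg fun i _ => hY i ω)
  have hmemT : ∀ n, MemLp (T n) (ENNReal.ofReal q) μ := fun n =>
    (memLp_finsetSum _ fun i _ => (hident i).symm.memLp_snd hmem).const_mul _
  have hrq' : ENNReal.ofReal r ≤ ENNReal.ofReal q := ENNReal.ofReal_le_ofReal hrq
  have hLLN : Tendsto (fun n => eLpNorm (fun ω => T n ω - ∫ ω, Y 0 ω ∂μ) (ENNReal.ofReal q) μ)
      atTop (𝓝 0) := by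
    simpa [T] using strong_law_Lp (by simpa using hq) ENNReal.ofReal_ne_top Y hmem hindep hident
  have hLLN_r : Tendsto (fun n => eLpNorm (fun ω => T n ω - ∫ ω, Y 0 ω ∂μ) (ENNReal.ofReal r) μ)
      atTop (𝓝 0) :=
    tendsto_of_tendsto_of_tendsto_of_le_of_le tendsto_const_nhds hLLN (fun _ => zero_le)
      fun n => eLpNorm_le_eLpNorm_of_exponent_le hrq'
        ((hmemT n).aestronglyMeasurable.sub aestronglyMeasurable_const)
  have hlpNorm : Tendsto (fun n => lpNorm (fun ω => T n ω - ∫ ω, Y 0 ω ∂μ) (ENNReal.ofReal r) μ)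
      atTop (𝓝 0) :=
    ((ENNReal.tendsto_toReal ENNReal.zero_ne_top).comp hLLN_r).congr fun n =>
      toReal_eLpNorm ((hmemT n).aestronglyMeasurable.sub aestronglyMeasurable_const)
  simpa only [hrescale] using tendsto_integral_rpow_of_tendsto_lpNorm_sub hT
    (integral_nonneg (hY 0)) hr (fun n => (hmemT n).mono_exponent hrq') hlpNorm

lemma tendsto_sqrt_variance_div_integral {ι : Type*} {l : Filter ι} {N : ι → Ω → ℝ} {a : ι → ℝ}
    {L : ℝ} (hN : ∀ i, MemLp (N i) 2 μ) (ha : ∀ᶠ i in l, 0 < a i) (hL : L ≠ 0)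
    (h₁ : Tendsto (fun i => (∫ ω, N i ω ∂μ) / a i) l (𝓝 L))
    (h₂ : Tendsto (fun i => (∫ ω, N i ω ^ 2 ∂μ) / a i ^ 2) l (𝓝 (L ^ 2))) :
    Tendsto (fun i => √(variance (N i) μ) / ∫ ω, N i ω ∂μ) l (𝓝 0) := by
  have hvar : Tendsto (fun i => variance (N i) μ / a i ^ 2) l (𝓝 0) := by
    have := h₂.sub (h₁.pow 2)
    rw [sub_self] at this
    refine this.congr fun i => ?_
    rw [variance_eq_sub (hN i), div_pow, sub_div]
    rfl
  have := hvar.sqrt.div h₁ hL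
  rw [Real.sqrt_zero, zero_div] at this
  refine this.congr' (ha.mono fun i hi => ?_)
  simp only [Pi.div_apply]
  rw [Real.sqrt_div (variance_nonneg _ _), Real.sqrt_sq hi.le, div_div_div_cancel_right₀ hi.ne']

end

/-- Fix `p > 0` and assume `0 < E|X|^m < ∞` for `m = max(2, p)`.  Then, as
`d → ∞`, `E‖X‖_p / d^{1/p} → μ_p^{1/p}`, `E‖X‖_p² / d^{2/p} → μ_p^{2/p}`, and
consequently `√(Var ‖X‖_p) / E‖X‖_p → 0`. -/
theorem stmt_7 {Ω : Type*} [MeasurableSpace Ω] (μ : Measure Ω) [IsProbabilityMeasure μ]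
    (X : ℕ → Ω → ℝ)
    (hXmeas : ∀ j, Measurable (X j))
    (hindep : iIndepFun X μ)
    (hident : ∀ j, IdentDistrib (X j) (X 0) μ μ)
    (p : ℝ) (hp : 0 < p)
    (hmom : Integrable (fun ω => |X 0 ω| ^ max 2 p) μ)
    (hpos : 0 < ∫ ω, |X 0 ω| ^ max 2 p ∂μ)
    (μp : ℝ) (hμp : μp = ∫ ω, |X 0 ω| ^ p ∂μ)
    (Np : ℕ → Ω → ℝ)
    (hNp : ∀ d ω, Np d ω = (∑ j ∈ Finset.range d, |X j ω| ^ p) ^ (1 / p)) :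
    Tendsto (fun d : ℕ => (∫ ω, Np d ω ∂μ) / (d : ℝ) ^ (1 / p)) atTop (nhds (μp ^ (1 / p)))
    ∧ Tendsto (fun d : ℕ => (∫ ω, (Np d ω) ^ 2 ∂μ) / (d : ℝ) ^ (2 / p)) atTop
        (nhds (μp ^ (2 / p)))
    ∧ Tendsto (fun d : ℕ => Real.sqrt (variance (Np d) μ) / ∫ ω, Np d ω ∂μ) atTop
        (nhds 0) := by
  subst hμp
  obtain rfl : Np = fun d ω => (∑ j ∈ Finset.range d, |X j ω| ^ p) ^ (1 / p) :=
    funext fun d => funext (hNp d)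
  set m := max 2 p
  have hm₂ : 2 ≤ m := le_max_left _ _
  have hmp : 1 ≤ m / p := (one_le_div hp).2 (le_max_right _ _)
  have hφ : Measurable fun x : ℝ => |x| ^ p := by fun_prop
  set Y : ℕ → Ω → ℝ := fun j ω => |X j ω| ^ p
  set S : ℕ → Ω → ℝ := fun d ω => ∑ j ∈ Finset.range d, Y j ω
  have hS : ∀ d ω, 0 ≤ S d ω := fun d ω => Finset.sum_nonneg fun j _ => by positivity
  have hYident : ∀ j, IdentDistrib (Y j) (Y 0) μ μ := fun j => (hident j).comp hφ
  have hYmem : MemLp (Y 0) (ENNReal.ofReal (m / p)) μ :=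
    memLp_abs_rpow_of_integrable (hXmeas 0).aestronglyMeasurable hp (by positivity) hmom
  have h2pm : 2 / p ≤ m / p := div_le_div_of_nonneg_right hm₂ hp.le
  have hlim : ∀ r, 0 < r → r ≤ m / p →
      Tendsto (fun d : ℕ => (∫ ω, S d ω ^ r ∂μ) / (d : ℝ) ^ r) atTop
        (𝓝 ((∫ ω, Y 0 ω ∂μ) ^ r)) := fun r hr hrm =>
    tendsto_integral_rpow_sum_div_rpow (fun j ω => by positivity) hmp hYmem
      (fun i j hij => (hindep.indepFun hij).comp hφ hφ) hYident hr hrm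
  have h₁ := hlim (1 / p) (by positivity) (div_le_div_of_nonneg_right (by linarith) hp.le)
  have h₂ := hlim (2 / p) (by positivity) h2pm
  simp_rw [← Real.rpow_one_div_sq (hS _ _)] at h₂
  have hμp : 0 < ∫ ω, Y 0 ω ∂μ :=
    (integral_abs_rpow_pos_iff hp (hYmem.integrable (by simpa using hmp))).2
      ((integral_abs_rpow_pos_iff (by positivity) hmom).1 hpos)
  have hSmem : ∀ d, MemLp (S d) (ENNReal.ofReal (2 / p)) μ := fun d =>
    (memLp_finsetSum _ fun j _ => (hYident j).symm.memLp_snd hYmem).mono_exponent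
      (ENNReal.ofReal_le_ofReal h2pm)
  refine ⟨h₁, h₂, tendsto_sqrt_variance_div_integral
    (fun d => memLp_two_rpow_one_div hp (hS d) (hSmem d))
    (eventually_gt_atTop 0 |>.mono fun d hd => by positivity) (by positivity) h₁ ?_⟩
  simpa only [Real.rpow_one_div_sq (Nat.cast_nonneg _), Real.rpow_one_div_sq hμp.le] using h₂
end

section
/- Fix p > 0 and assume 0 < E|X|^m < ∞ for m = max(2, p). Then ‖X‖_p / E‖X‖_p → 1 in probability as d → ∞; that is, for every ε > 0, P{ |‖X‖_p / E‖X‖_p − 1| ≥ ε } → 0 as d → ∞ (relative stability of the sequence {‖X‖_p}). -/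
/-!
Put `Y j = |X j|^p` and `f d = (Y 0 + ⋯ + Y (d-1)) / d`, so that `‖X‖_p = d^(1/p) f_d^(1/p)` and
the ratio in question is `f_d^(1/p) / E f_d^(1/p)`. The moment assumption puts `Y 0` in `L^r`
with `r = max(2,p)/p ≥ max(1, 1/p)`, so by the `L^r` strong law `f d → E Y 0 > 0` in `L^r`.
Then the family `f_d^(1/p)` is uniformly integrable in `L^max(2,p)` and tends to `(E Y 0)^(1/p)`
in probability; by Vitali's theorem its mean has the same limit, and the ratio tends to `1` in
probability.
-/

open MeasureTheory ProbabilityTheory Filter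
open scoped ENNReal Topology

namespace MeasureTheory

variable {α ι : Type*} [MeasurableSpace α] {μ : Measure α} {l : Filter ι}

theorem TendstoInMeasure.comp_prodMk_continuousAt {E F G : Type*} [PseudoMetricSpace E]
    [PseudoMetricSpace F] [TopologicalSpace G] {f : ι → α → E} {c : E} {b : ι → G} {c' : G}
    {φ : E × G → F} (hf : TendstoInMeasure μ f l fun _ => c) (hb : Tendsto b l (𝓝 c'))
    (hφ : ContinuousAt φ (c, c')) :
    TendstoInMeasure μ (fun i x => φ (f i x, b i)) l fun _ => φ (c, c') := by
  rw [tendstoInMeasure_iff_dist] at hf ⊢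
  intro ε hε
  obtain ⟨U, hU, V, hV, hUV⟩ := mem_nhds_prod_iff.1 (hφ (Metric.ball_mem_nhds _ hε))
  obtain ⟨δ, hδ, hδU⟩ := Metric.mem_nhds_iff.1 hU
  refine tendsto_of_tendsto_of_tendsto_of_le_of_le' tendsto_const_nhds (hf δ hδ)
    (.of_forall fun _ => zero_le) ?_
  filter_upwards [hb hV] with i hi
  refine measure_mono fun x (hx : ε ≤ _) => show δ ≤ _ from not_lt.1 fun hlt => ?_
  exact not_lt.2 hx (hUV ⟨hδU (Metric.mem_ball.2 hlt), hi⟩)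

theorem TendstoInMeasure.comp_continuousAt {E F : Type*} [PseudoMetricSpace E]
    [PseudoMetricSpace F] {f : ι → α → E} {c : E} {φ : E → F}
    (hf : TendstoInMeasure μ f l fun _ => c) (hφ : ContinuousAt φ c) :
    TendstoInMeasure μ (fun i x => φ (f i x)) l fun _ => φ c :=
  hf.comp_prodMk_continuousAt (b := fun _ => ()) tendsto_const_nhds (φ := fun z => φ z.1)
    (hφ.comp continuousAt_fst)

theorem UnifIntegrable.norm_rpow {E : Type*} [NormedAddCommGroup E] {f : ι → α → E}
    {p : ℝ≥0∞} {q : ℝ} (hq : 0 < q) (hf : UnifIntegrable f (p * ENNReal.ofReal q) μ) :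
    UnifIntegrable (fun i x => ‖f i x‖ ^ q) p μ := by
  intro ε hε
  obtain ⟨δ, hδ, hfδ⟩ := hf (Real.rpow_pos_of_pos hε q⁻¹)
  refine ⟨δ, hδ, fun i s hs hμs => ?_⟩
  have hind : s.indicator (fun x => ‖f i x‖ ^ q) = fun x => ‖s.indicator (f i) x‖ ^ q := by
    ext x
    by_cases hx : x ∈ s <;> simp [hx, Real.zero_rpow hq.ne']
  calc eLpNorm (s.indicator fun x => ‖f i x‖ ^ q) p μ
      = eLpNorm (s.indicator (f i)) (p * ENNReal.ofReal q) μ ^ q := by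
        rw [hind, eLpNorm_norm_rpow _ hq]
    _ ≤ ENNReal.ofReal (ε ^ q⁻¹) ^ q := by gcongr; exact hfδ i s hs hμs
    _ = ENNReal.ofReal ε := by
        rw [ENNReal.ofReal_rpow_of_pos (by positivity), ← Real.rpow_mul hε.le,
          inv_mul_cancel₀ hq.ne', Real.rpow_one]

theorem tendsto_eLpNorm_norm_rpow_sub_const [IsFiniteMeasure μ] {E : Type*}
    [NormedAddCommGroup E] {f : ℕ → α → E} {c : E} {r : ℝ≥0∞} {q : ℝ} (hr : 1 ≤ r) (hr' : r ≠ ∞)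
    (hq : 0 < q) (hrq : 1 ≤ r * ENNReal.ofReal q) (hf : ∀ n, MemLp (f n) (r * ENNReal.ofReal q) μ)
    (hfc : Tendsto (fun n => eLpNorm (f n - fun _ => c) (r * ENNReal.ofReal q) μ) atTop (𝓝 0)) :
    Tendsto (fun n => eLpNorm ((fun x => ‖f n x‖ ^ q) - fun _ => ‖c‖ ^ q) r μ) atTop (𝓝 0) := by
  have hrq' : r * ENNReal.ofReal q ≠ ∞ := ENNReal.mul_ne_top hr' ENNReal.ofReal_ne_top
  have hφ : Continuous fun x : E => ‖x‖ ^ q := continuous_norm.rpow_const fun _ => .inr hq.le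
  refine tendsto_Lp_finite_of_tendstoInMeasure hr hr'
    (fun n => hφ.comp_aestronglyMeasurable (hf n).1) (memLp_const _) ?_ ?_
  · exact (unifIntegrable_of_tendsto_Lp hrq hrq' hf (memLp_const c) hfc).norm_rpow hq
  · exact (tendstoInMeasure_of_tendsto_eLpNorm (by positivity) (fun n => (hf n).1)
      aestronglyMeasurable_const hfc).comp_continuousAt hφ.continuousAt

theorem TendstoInMeasure.div_of_tendsto {g : ι → α → ℝ} {b : ι → ℝ} {B : ℝ} (hB : B ≠ 0)
    (hg : TendstoInMeasure μ g l fun _ => B) (hb : Tendsto b l (𝓝 B)) :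
    TendstoInMeasure μ (fun i x => g i x / b i) l fun _ => 1 := by
  have := hg.comp_prodMk_continuousAt hb (φ := fun z => z.1 / z.2)
    (continuousAt_fst.div continuousAt_snd hB)
  simpa [div_self hB] using this

theorem tendsto_integral_of_tendsto_eLpNorm [IsProbabilityMeasure μ] {G : Type*}
    [NormedAddCommGroup G] [NormedSpace ℝ G] {F : ι → α → G} {f : α → G} {r : ℝ≥0∞}
    (hr : 1 ≤ r) (hF : ∀ i, MemLp (F i) r μ) (hf : MemLp f r μ)
    (hFf : Tendsto (fun i => eLpNorm (F i - f) r μ) l (𝓝 0)) :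
    Tendsto (fun i => ∫ x, F i x ∂μ) l (𝓝 (∫ x, f x ∂μ)) :=
  tendsto_integral_of_L1' f hf.1 (.of_forall fun i => (hF i).integrable hr) <|
    tendsto_of_tendsto_of_tendsto_of_le_of_le tendsto_const_nhds hFf (fun _ => zero_le)
      fun i => eLpNorm_le_eLpNorm_of_exponent_le hr ((hF i).1.sub hf.1)

theorem memLp_abs_rpow_of_integrable_abs_rpow {Z : α → ℝ} (hZ : AEStronglyMeasurable Z μ)
    {p m : ℝ} (hp : 0 < p) (hm : 0 < m) (h : Integrable (fun ω => |Z ω| ^ m) μ) :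
    MemLp (fun ω => |Z ω| ^ p) (ENNReal.ofReal m * ENNReal.ofReal (1 / p)) μ := by
  have hZm : MemLp Z (ENNReal.ofReal m) μ := by
    have := memLp_norm_rpow_iff (p := ENNReal.ofReal m) (q := ENNReal.ofReal m) hZ
      (by positivity) ENNReal.ofReal_ne_top
    rw [ENNReal.div_self (by positivity) ENNReal.ofReal_ne_top, ENNReal.toReal_ofReal hm.le,
      memLp_one_iff_integrable] at this
    exact this.1 (by simpa only [Real.norm_eq_abs] using h)
  have := hZm.norm_rpow_div (ENNReal.ofReal p)
  rwa [ENNReal.toReal_ofReal hp.le, ← ENNReal.ofReal_div_of_pos hp, div_eq_mul_one_div,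
    ENNReal.ofReal_mul hm.le] at this

theorem integral_abs_rpow_pos {Z : α → ℝ} {p m : ℝ} (hp : p ≠ 0) (hm : m ≠ 0)
    (hZp : Integrable (fun ω => |Z ω| ^ p) μ) (hZm : 0 < ∫ ω, |Z ω| ^ m ∂μ) :
    0 < ∫ ω, |Z ω| ^ p ∂μ := by
  have hsupp : ∀ q : ℝ, q ≠ 0 → Function.support (fun ω => |Z ω| ^ q) = Function.support Z :=
    fun q hq => by ext ω; simp [Real.rpow_eq_zero (abs_nonneg _) hq]
  rw [integral_pos_iff_support_of_nonneg (fun ω => by positivity)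
    (Integrable.of_integral_ne_zero hZm.ne'), hsupp m hm] at hZm
  rwa [integral_pos_iff_support_of_nonneg (fun ω => by positivity) hZp, hsupp p hp]

end MeasureTheory

namespace ProbabilityTheory

variable {Ω : Type*} [MeasurableSpace Ω] {μ : Measure Ω}

theorem tendstoInMeasure_rpow_sum_div_integral [IsProbabilityMeasure μ] {Y : ℕ → Ω → ℝ}
    (hY : ∀ j ω, 0 ≤ Y j ω) (hindep : Pairwise (Function.onFun (IndepFun · · μ) Y))
    (hident : ∀ j, IdentDistrib (Y j) (Y 0) μ μ)
    {r : ℝ≥0∞} {s : ℝ} (hr : 1 ≤ r) (hr' : r ≠ ∞) (hs : 0 < s) (hrs : 1 ≤ r * ENNReal.ofReal s)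
    (hY0 : MemLp (Y 0) (r * ENNReal.ofReal s) μ) (hA : 0 < ∫ ω, Y 0 ω ∂μ) :
    TendstoInMeasure μ
      (fun d ω => (∑ j ∈ Finset.range d, Y j ω) ^ s / ∫ ω', (∑ j ∈ Finset.range d, Y j ω') ^ s ∂μ)
      atTop fun _ => 1 := by
  set A := ∫ ω, Y 0 ω ∂μ
  set f : ℕ → Ω → ℝ := fun d ω => (d : ℝ)⁻¹ • ∑ j ∈ Finset.range d, Y j ω
  have hrs' : r * ENNReal.ofReal s ≠ ∞ := ENNReal.mul_ne_top hr' ENNReal.ofReal_ne_top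
  have hf : ∀ d, MemLp (f d) (r * ENNReal.ofReal s) μ := fun d => by
    convert (memLp_finsetSum' (Finset.range d) fun j _ =>
      (hident j).symm.memLp_snd hY0).const_smul (d : ℝ)⁻¹
    ext ω
    simp [f, Finset.sum_apply]
  have hg : ∀ d, MemLp (fun ω => ‖f d ω‖ ^ s) r μ := fun d => by
    have := (hf d).norm_rpow_div (ENNReal.ofReal s)
    rwa [ENNReal.mul_div_cancel_right (by positivity) ENNReal.ofReal_ne_top,
      ENNReal.toReal_ofReal hs.le] at this
  have hL := tendsto_eLpNorm_norm_rpow_sub_const hr hr' hs hrs hf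
    (strong_law_Lp hrs hrs' Y hY0 hindep hident)
  have hgA : TendstoInMeasure μ (fun d ω => ‖f d ω‖ ^ s) atTop fun _ => ‖A‖ ^ s :=
    tendstoInMeasure_of_tendsto_eLpNorm (by positivity) (fun d => (hg d).1)
      aestronglyMeasurable_const hL
  have hb := tendsto_integral_of_tendsto_eLpNorm hr hg (memLp_const _) hL
  simp only [integral_const, probReal_univ, one_smul] at hb
  have hB : ‖A‖ ^ s ≠ 0 := (Real.rpow_pos_of_pos (norm_pos_iff.2 hA.ne') s).ne'
  refine (hgA.div_of_tendsto hB hb).congr' ?_ (.of_forall fun _ => rfl)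
  filter_upwards [eventually_ne_atTop 0] with d hd
  have hsum : ∀ ω, (∑ j ∈ Finset.range d, Y j ω) ^ s = (d : ℝ) ^ s * ‖f d ω‖ ^ s := fun ω => by
    have hfd : f d ω = (d : ℝ)⁻¹ * ∑ j ∈ Finset.range d, Y j ω := rfl
    have hsum0 : 0 ≤ ∑ j ∈ Finset.range d, Y j ω := Finset.sum_nonneg fun j _ => hY j ω
    rw [hfd, Real.norm_eq_abs, abs_of_nonneg (by positivity), ← Real.mul_rpow (by positivity)
      (by positivity), mul_inv_cancel_left₀ (by positivity)]
  refine .of_forall fun ω => ?_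
  simp only [hsum, integral_const_mul]
  exact (mul_div_mul_left _ _ (by positivity)).symm

end ProbabilityTheory

/-- Fix `p > 0` and assume `0 < E|X|^m < ∞` for `m = max(2, p)`.  Then
`‖X‖_p / E‖X‖_p → 1` in probability as `d → ∞`: for every `ε > 0`,
`P{ |‖X‖_p / E‖X‖_p − 1| ≥ ε } → 0`. -/
theorem stmt_8 {Ω : Type*} [MeasurableSpace Ω] (μ : Measure Ω) [IsProbabilityMeasure μ]
    (X : ℕ → Ω → ℝ)
    (hXmeas : ∀ j, Measurable (X j))
    (hindep : iIndepFun X μ)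
    (hident : ∀ j, IdentDistrib (X j) (X 0) μ μ)
    (p : ℝ) (hp : 0 < p)
    (hmom : Integrable (fun ω => |X 0 ω| ^ max 2 p) μ)
    (hpos : 0 < ∫ ω, |X 0 ω| ^ max 2 p ∂μ)
    (Np : ℕ → Ω → ℝ)
    (hNp : ∀ d ω, Np d ω = (∑ j ∈ Finset.range d, |X j ω| ^ p) ^ (1 / p)) :
    ∀ ε : ℝ, 0 < ε →
      Tendsto (fun d : ℕ => μ {ω | ε ≤ |Np d ω / (∫ ω', Np d ω' ∂μ) - 1|}) atTop
        (nhds 0) := by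
  have hm : 0 < max 2 p := lt_max_of_lt_left two_pos
  have hφ : Measurable fun x : ℝ => |x| ^ p := by fun_prop
  have hrs : 1 ≤ ENNReal.ofReal (max 2 p) * ENNReal.ofReal (1 / p) := by
    rw [← ENNReal.ofReal_mul hm.le, ENNReal.one_le_ofReal, ← div_eq_mul_one_div, one_le_div hp]
    exact le_max_right 2 p
  have hY0 := memLp_abs_rpow_of_integrable_abs_rpow (hXmeas 0).aestronglyMeasurable hp hm hmom
  have hA := integral_abs_rpow_pos hp.ne' hm.ne' (hY0.integrable hrs) hpos
  have key := tendstoInMeasure_rpow_sum_div_integral (Y := fun j ω => |X j ω| ^ p)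
    (fun j ω => by positivity) (fun i j hij => (hindep.comp _ fun _ => hφ).indepFun hij)
    (fun j => (hident j).comp hφ) (ENNReal.one_le_ofReal.2 (one_le_two.trans (le_max_left 2 p)))
    ENNReal.ofReal_ne_top (by positivity) hrs hY0 hA
  rw [tendstoInMeasure_iff_dist] at key
  simpa only [hNp, Real.dist_eq] using key
end

section
/- Fix p > 0 with μ_p = E|X|^p < ∞, and fix n ≥ 1. Let X_1, …, X_n be i.i.d. copies of X = (X_1, …, X_d), an ℝ^d-valued random vector with i.i.d. components. Then, as d → ∞, d^{−1/p} ( max_{1≤i≤n} ‖X_i‖_p − min_{1≤i≤n} ‖X_i‖_p ) → 0 in probability; and if moreover 0 < μ_p, then ( max_{1≤i≤n} ‖X_i‖_p ) / ( min_{1≤i≤n} ‖X_i‖_p ) → 1 in probability. -/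
/-!
By the strong law of large numbers applied to each row `(|X i j|^p)_j`, almost surely
`d^{-1/p} ‖X_i‖_p = ((1/d) ∑_{j<d} |X i j|^p)^{1/p} → μ_p^{1/p}` for every `i`, hence the rescaled
maximum and minimum over `i < n` both tend to `μ_p^{1/p}`. Their difference therefore tends to `0`
and, when `μ_p > 0`, their ratio (in which the scaling cancels) tends to `1`, almost surely and so
in probability.
-/

open MeasureTheory ProbabilityTheory Filter Topology Finset

section FinsetLattice

variable {ι α : Type*} {s : Finset ι}

theorem Finset.aemeasurable_sup'_apply {β : Type*} [MeasurableSpace β] [SemilatticeSup β]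
    [MeasurableSup₂ β] {Ω : Type*} [MeasurableSpace Ω] {μ : Measure Ω} (hs : s.Nonempty)
    {f : ι → Ω → β} (hf : ∀ i ∈ s, AEMeasurable (f i) μ) :
    AEMeasurable (fun ω => s.sup' hs (f · ω)) μ := by
  simpa only [← Finset.sup'_apply] using
    Finset.sup'_induction hs (p := (AEMeasurable · μ)) f (fun _ hg _ hh => hg.sup hh) hf

theorem Finset.aemeasurable_inf'_apply {β : Type*} [MeasurableSpace β] [SemilatticeInf β]
    [MeasurableInf₂ β] {Ω : Type*} [MeasurableSpace Ω] {μ : Measure Ω} (hs : s.Nonempty)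
    {f : ι → Ω → β} (hf : ∀ i ∈ s, AEMeasurable (f i) μ) :
    AEMeasurable (fun ω => s.inf' hs (f · ω)) μ := by
  simpa only [← Finset.inf'_apply] using
    Finset.inf'_induction hs (p := (AEMeasurable · μ)) f (fun _ hg _ hh => hg.inf hh) hf

variable (hs : s.Nonempty) {l : Filter α} {c : α → ℝ} {N : ι → α → ℝ} {L : ℝ}
include hs

theorem tendsto_mul_sup' (hc : ∀ᶠ a in l, 0 < c a)
    (h : ∀ i ∈ s, Tendsto (fun a => c a * N i a) l (𝓝 L)) :
    Tendsto (fun a => c a * s.sup' hs (N · a)) l (𝓝 L) := by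
  have hlim : Tendsto (fun a => s.sup' hs (fun i => c a * N i a)) l (𝓝 L) := by
    simpa using Tendsto.finset_sup'_nhds_apply hs h
  refine hlim.congr' ?_
  filter_upwards [hc] with a ha
  exact (map_finset_sup' (OrderIso.mulLeft₀ _ ha) hs _).symm

theorem tendsto_mul_inf' (hc : ∀ᶠ a in l, 0 < c a)
    (h : ∀ i ∈ s, Tendsto (fun a => c a * N i a) l (𝓝 L)) :
    Tendsto (fun a => c a * s.inf' hs (N · a)) l (𝓝 L) := by
  have hlim : Tendsto (fun a => s.inf' hs (fun i => c a * N i a)) l (𝓝 L) := by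
    simpa using Tendsto.finset_inf'_nhds_apply hs h
  refine hlim.congr' ?_
  filter_upwards [hc] with a ha
  exact (map_finset_inf' (OrderIso.mulLeft₀ _ ha) hs _).symm

theorem tendsto_mul_sup'_sub_inf' (hc : ∀ᶠ a in l, 0 < c a)
    (h : ∀ i ∈ s, Tendsto (fun a => c a * N i a) l (𝓝 L)) :
    Tendsto (fun a => c a * (s.sup' hs (N · a) - s.inf' hs (N · a))) l (𝓝 0) := by
  simpa only [mul_sub, sub_self] using (tendsto_mul_sup' hs hc h).sub (tendsto_mul_inf' hs hc h)

theorem tendsto_sup'_div_inf' (hc : ∀ᶠ a in l, 0 < c a) (hL : L ≠ 0)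
    (h : ∀ i ∈ s, Tendsto (fun a => c a * N i a) l (𝓝 L)) :
    Tendsto (fun a => s.sup' hs (N · a) / s.inf' hs (N · a)) l (𝓝 1) := by
  have hlim := (tendsto_mul_sup' hs hc h).div (tendsto_mul_inf' hs hc h) hL
  rw [div_self hL] at hlim
  refine hlim.congr' ?_
  filter_upwards [hc] with a ha
  exact mul_div_mul_left _ _ ha.ne'

end FinsetLattice

section Probability

variable {Ω : Type*} [MeasurableSpace Ω] {μ : Measure Ω}

theorem tendsto_measure_abs_sub_ge_of_ae_tendsto [IsFiniteMeasure μ] {F : ℕ → Ω → ℝ} {c : ℝ}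
    (hF : ∀ d, AEStronglyMeasurable (F d) μ)
    (h : ∀ᵐ ω ∂μ, Tendsto (F · ω) atTop (𝓝 c)) {ε : ℝ} (hε : 0 < ε) :
    Tendsto (fun d => μ {ω | ε ≤ |F d ω - c|}) atTop (𝓝 0) := by
  simpa only [Real.dist_eq] using
    tendstoInMeasure_iff_dist.mp (tendstoInMeasure_of_tendsto_ae hF h) ε hε

variable {X : ℕ → ℕ → Ω → ℝ}
  (hindep : ∀ i, Pairwise fun j k => IndepFun (X i j) (X i k) μ)
  (hident : ∀ i j, IdentDistrib (X i j) (X 0 0) μ μ)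
include hindep hident

theorem ae_tendsto_sum_range_comp_div {g : ℝ → ℝ} (hg : Measurable g)
    (hint : Integrable (g ∘ X 0 0) μ) :
    ∀ᵐ ω ∂μ, ∀ i, Tendsto (fun d : ℕ => (∑ j ∈ range d, g (X i j ω)) / d) atTop
      (𝓝 (∫ ω, g (X 0 0 ω) ∂μ)) := by
  refine ae_all_iff.mpr fun i => ?_
  have hid : ∀ j, IdentDistrib (g ∘ X i j) (g ∘ X 0 0) μ μ := fun j => (hident i j).comp hg
  have := strong_law_ae_real (fun j => g ∘ X i j) ((hid 0).integrable_iff.mpr hint)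
    (fun j k hjk => (hindep i hjk).comp hg hg) fun j => (hid j).trans (hid 0).symm
  rw [(hid 0).integral_eq] at this
  simpa only [Function.comp_apply] using this

theorem ae_tendsto_rpow_neg_mul_sum_rpow {p : ℝ} (hp : 0 < p)
    (hmom : Integrable (fun ω => |X 0 0 ω| ^ p) μ) :
    ∀ᵐ ω ∂μ, ∀ i, Tendsto
      (fun d : ℕ => (d : ℝ) ^ (-(1 / p)) * (∑ j ∈ range d, |X i j ω| ^ p) ^ (1 / p)) atTop
      (𝓝 ((∫ ω, |X 0 0 ω| ^ p ∂μ) ^ (1 / p))) := by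
  have hg : Continuous fun x : ℝ => |x| ^ p := continuous_abs.rpow_const fun _ => Or.inr hp.le
  filter_upwards [ae_tendsto_sum_range_comp_div hindep hident hg.measurable hmom] with ω hω i
  refine ((hω i).rpow_const (Or.inr (by positivity))).congr fun d => ?_
  have hS : 0 ≤ ∑ j ∈ range d, |X i j ω| ^ p := sum_nonneg fun j _ => by positivity
  rw [Real.div_rpow hS d.cast_nonneg, Real.rpow_neg d.cast_nonneg, div_eq_inv_mul]

end Probability

theorem stmt_16_general {Ω : Type*} [MeasurableSpace Ω] (μ : Measure Ω) [IsProbabilityMeasure μ]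
    (X : ℕ → ℕ → Ω → ℝ)
    (hindep : iIndepFun (fun q : ℕ × ℕ => X q.1 q.2) μ)
    (hident : ∀ i j, IdentDistrib (X i j) (X 0 0) μ μ)
    (p : ℝ) (hp : 0 < p)
    (hmom : Integrable (fun ω => |X 0 0 ω| ^ p) μ)
    (μp : ℝ) (hμp : μp = ∫ ω, |X 0 0 ω| ^ p ∂μ)
    (n : ℕ) (hn : 0 < n)
    (Np : ℕ → ℕ → Ω → ℝ)
    (hNp : ∀ i d ω, Np i d ω = (∑ j ∈ Finset.range d, |X i j ω| ^ p) ^ (1 / p)) :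
    (∀ ε : ℝ, 0 < ε →
      Tendsto
        (fun d : ℕ =>
          μ {ω | ε ≤ |(d : ℝ) ^ (-(1 / p)) *
            ((Finset.range n).sup' (Finset.nonempty_range_iff.mpr hn.ne') (fun i => Np i d ω)
              - (Finset.range n).inf' (Finset.nonempty_range_iff.mpr hn.ne')
                  (fun i => Np i d ω))|})
        atTop (nhds 0))
    ∧ (0 < μp → ∀ ε : ℝ, 0 < ε →
        Tendsto
          (fun d : ℕ =>
            μ {ω | ε ≤ |(Finset.range n).sup' (Finset.nonempty_range_iff.mpr hn.ne')
                  (fun i => Np i d ω) /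
                (Finset.range n).inf' (Finset.nonempty_range_iff.mpr hn.ne')
                  (fun i => Np i d ω) - 1|})
          atTop (nhds 0)) := by
  have hne := Finset.nonempty_range_iff.mpr hn.ne'
  have hrow : ∀ i, Pairwise fun j k => IndepFun (X i j) (X i k) μ :=
    fun i j k hjk => hindep.indepFun (i := (i, j)) (j := (i, k)) (by simpa using hjk)
  have hlim : ∀ᵐ ω ∂μ, ∀ i, Tendsto (fun d : ℕ => (d : ℝ) ^ (-(1 / p)) * Np i d ω) atTop
      (𝓝 (μp ^ (1 / p))) := by
    simpa only [hNp, ← hμp] using ae_tendsto_rpow_neg_mul_sum_rpow hrow hident hp hmom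
  have hc : ∀ᶠ d : ℕ in atTop, 0 < (d : ℝ) ^ (-(1 / p)) :=
    eventually_gt_atTop 0 |>.mono fun d hd => by positivity
  have hNpmeas : ∀ i d, AEMeasurable (Np i d) μ := fun i d => by
    rw [funext (hNp i d)]
    exact (Finset.aemeasurable_fun_sum _ fun j _ =>
      ((hident i j).aemeasurable_fst.abs).pow_const p).pow_const _
  have hsup d := Finset.aemeasurable_sup'_apply hne fun i _ => hNpmeas i d
  have hinf d := Finset.aemeasurable_inf'_apply hne fun i _ => hNpmeas i d
  refine ⟨fun ε hε => ?_, fun hμp_pos ε hε => ?_⟩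
  · simpa only [Pi.mul_apply, Pi.sub_apply, sub_zero] using
      tendsto_measure_abs_sub_ge_of_ae_tendsto
      (fun d => (aemeasurable_const.mul ((hsup d).sub (hinf d))).aestronglyMeasurable)
      (hlim.mono fun ω hω => tendsto_mul_sup'_sub_inf' hne hc fun i _ => hω i) hε
  · exact tendsto_measure_abs_sub_ge_of_ae_tendsto
      (fun d => ((hsup d).div (hinf d)).aestronglyMeasurable)
      (hlim.mono fun ω hω =>
        tendsto_sup'_div_inf' hne hc (by positivity) fun i _ => hω i) hε

/-- Fix `p > 0` with `μ_p = E|X|^p < ∞` and `n ≥ 1`.  For `X_1, …, X_n`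
i.i.d. copies of the `d`-dimensional vector `X` (with i.i.d. components `X i j`), as
`d → ∞`, `d^{−1/p}(max_i ‖X_i‖_p − min_i ‖X_i‖_p) → 0` in probability, and if
moreover `0 < μ_p`, then `(max_i ‖X_i‖_p)/(min_i ‖X_i‖_p) → 1` in probability. -/
theorem stmt_16 {Ω : Type*} [MeasurableSpace Ω] (μ : Measure Ω) [IsProbabilityMeasure μ]
    (X : ℕ → ℕ → Ω → ℝ)
    (hXmeas : ∀ i j, Measurable (X i j))
    (hindep : iIndepFun (fun q : ℕ × ℕ => X q.1 q.2) μ)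
    (hident : ∀ i j, IdentDistrib (X i j) (X 0 0) μ μ)
    (p : ℝ) (hp : 0 < p)
    (hmom : Integrable (fun ω => |X 0 0 ω| ^ p) μ)
    (μp : ℝ) (hμp : μp = ∫ ω, |X 0 0 ω| ^ p ∂μ)
    (n : ℕ) (hn : 0 < n)
    (Np : ℕ → ℕ → Ω → ℝ)
    (hNp : ∀ i d ω, Np i d ω = (∑ j ∈ Finset.range d, |X i j ω| ^ p) ^ (1 / p)) :
    (∀ ε : ℝ, 0 < ε →
      Tendsto
        (fun d : ℕ =>
          μ {ω | ε ≤ |(d : ℝ) ^ (-(1 / p)) *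
            ((Finset.range n).sup' (Finset.nonempty_range_iff.mpr hn.ne') (fun i => Np i d ω)
              - (Finset.range n).inf' (Finset.nonempty_range_iff.mpr hn.ne')
                  (fun i => Np i d ω))|})
        atTop (nhds 0))
    ∧ (0 < μp → ∀ ε : ℝ, 0 < ε →
        Tendsto
          (fun d : ℕ =>
            μ {ω | ε ≤ |(Finset.range n).sup' (Finset.nonempty_range_iff.mpr hn.ne')
                  (fun i => Np i d ω) /
                (Finset.range n).inf' (Finset.nonempty_range_iff.mpr hn.ne')
                  (fun i => Np i d ω) - 1|})
          atTop (nhds 0)) :=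
  stmt_16_general μ X hindep hident p hp hmom μp hμp n hn Np hNp
end
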